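/- A single MPLP++ edge update never decreases the block dual: for any θ_u, θ_v : Y → ℝ and θ_uv : Y × Y → ℝ, setting g(s,t) = θ_u(s) + θ_v(t) + θ_uv(s,t) and θ^H_uv(s,t) = g(s,t) − θ^H_u(s) − θ^H_v(t), one has min_s θ^H_u(s) + min_t θ^H_v(t) + min_{(s,t)} θ^H_uv(s,t) ≥ min_s θ_u(s) + min_t θ_v(t) + min_{(s,t)} θ_uv(s,t). -/
import Mathlib


/-- Minimum of a real-valued function over a finite nonempty type. -/
noncomputable def fmin {Y : Type*} [Fintype Y] [Nonempty Y] (f : Y → ℝ) : ℝ :=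
  Finset.univ.inf' Finset.univ_nonempty f

/-- MPLP update, unary at `u`: `θ^M_u(s) = (1/2)·min_t g(s,t)`. -/
noncomputable def thetaMu {Y : Type*} [Fintype Y] [Nonempty Y] (g : Y × Y → ℝ) (s : Y) : ℝ :=
  (1 / 2) * fmin (fun t => g (s, t))

/-- MPLP update, unary at `v`: `θ^M_v(t) = (1/2)·min_s g(s,t)`. -/
noncomputable def thetaMv {Y : Type*} [Fintype Y] [Nonempty Y] (g : Y × Y → ℝ) (t : Y) : ℝ :=
  (1 / 2) * fmin (fun s => g (s, t))

/-- MPLP++ (handshake) update, unary at `v`: `θ^H_v(t) = min_s [g(s,t) − θ^M_u(s)]`. -/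
noncomputable def thetaHv {Y : Type*} [Fintype Y] [Nonempty Y] (g : Y × Y → ℝ) (t : Y) : ℝ :=
  fmin (fun s => g (s, t) - thetaMu g s)

/-- MPLP++ (handshake) update, unary at `u`: `θ^H_u(s) = min_t [g(s,t) − θ^H_v(t)]`. -/
noncomputable def thetaHu {Y : Type*} [Fintype Y] [Nonempty Y] (g : Y × Y → ℝ) (s : Y) : ℝ :=
  fmin (fun t => g (s, t) - thetaHv g t)

/-- Uniform update, unary at `u`: constant `(1/2)·min_{(s',t')} g(s',t')`. -/
noncomputable def thetaUu {Y : Type*} [Fintype Y] [Nonempty Y] (g : Y × Y → ℝ) (_ : Y) : ℝ :=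
  (1 / 2) * fmin g

/-- Uniform update, unary at `v`: constant `(1/2)·min_{(s',t')} g(s',t')`. -/
noncomputable def thetaUv {Y : Type*} [Fintype Y] [Nonempty Y] (g : Y × Y → ℝ) (_ : Y) : ℝ :=
  (1 / 2) * fmin g

lemma fmin_le' {Y : Type*} [Fintype Y] [Nonempty Y] (f : Y → ℝ) (y : Y) :
    fmin f ≤ f y := Finset.inf'_le _ (Finset.mem_univ y)

lemma le_fmin' {Y : Type*} [Fintype Y] [Nonempty Y] {f : Y → ℝ} {a : ℝ}
    (h : ∀ y, a ≤ f y) : a ≤ fmin f := Finset.le_inf' _ _ (fun y _ => h y)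

/-- A single MPLP++ edge update never decreases the block dual. -/
theorem mplpp_update_nondecreasing {Y : Type*} [Fintype Y] [Nonempty Y]
    (θu θv : Y → ℝ) (θuv : Y × Y → ℝ) :
    let g : Y × Y → ℝ := fun p => θu p.1 + θv p.2 + θuv p
    fmin θu + fmin θv + fmin θuv ≤
      fmin (thetaHu g) + fmin (thetaHv g) +
        fmin (fun p : Y × Y => g p - thetaHu g p.1 - thetaHv g p.2) := by
  intro g
  have hg : fmin θu + fmin θv + fmin θuv ≤ fmin g := by
    apply le_fmin'
    intro p
    have h1 := fmin_le' θu p.1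
    have h2 := fmin_le' θv p.2
    have h3 := fmin_le' θuv p
    simp only [g]
    linarith
  clear_value g
  have hMu_lb : ∀ s, (1 / 2) * fmin g ≤ thetaMu g s := by
    intro s
    unfold thetaMu
    have : fmin g ≤ fmin (fun t => g (s, t)) :=
      le_fmin' (fun t => fmin_le' g (s, t))
    linarith
  have hMu_ub : ∀ s t, thetaMu g s ≤ (1 / 2) * g (s, t) := by
    intro s t
    unfold thetaMu
    have := fmin_le' (fun t => g (s, t)) t
    have h2 := mul_le_mul_of_nonneg_left this (by norm_num : (0:ℝ) ≤ 1/2)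
    linarith
  have hHv_ub : ∀ s t, thetaHv g t ≤ g (s, t) - thetaMu g s := by
    intro s t
    exact fmin_le' (fun s => g (s, t) - thetaMu g s) s
  have hHv_lb : ∀ t, (1 / 2) * fmin g ≤ thetaHv g t := by
    intro t
    apply le_fmin'
    intro s
    have h1 := hMu_ub s t
    have h2 := fmin_le' g (s, t)
    show (1:ℝ)/2 * fmin g ≤ g (s,t) - thetaMu g s
    linarith
  have hHu_ub : ∀ s t, thetaHu g s ≤ g (s, t) - thetaHv g t := by
    intro s t
    exact fmin_le' (fun t => g (s, t) - thetaHv g t) t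
  have hHu_lb : ∀ s, (1 / 2) * fmin g ≤ thetaHu g s := by
    intro s
    apply le_fmin'
    intro t
    have h1 := hHv_ub s t
    have h2 := hMu_lb s
    show (1:ℝ)/2 * fmin g ≤ g (s,t) - thetaHv g t
    linarith
  have hA : (1 / 2) * fmin g ≤ fmin (thetaHu g) := le_fmin' hHu_lb
  have hB : (1 / 2) * fmin g ≤ fmin (thetaHv g) := le_fmin' hHv_lb
  have hC : (0 : ℝ) ≤ fmin (fun p : Y × Y => g p - thetaHu g p.1 - thetaHv g p.2) := by
    apply le_fmin'
    intro p
    have h := hHu_ub p.1 p.2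
    show (0:ℝ) ≤ g p - thetaHu g p.1 - thetaHv g p.2
    have : g p = g (p.1, p.2) := by rfl
    linarith
  linarith
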